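/- arXiv:2504.15413 — 2 statements merged into one kernel-verified Lean document; each statement's English description precedes it below -/
import Mathlib

section
/- Let λ ⊢ m, s a word of weight λ, t a word of weight λ', and π any element of G(s,t). Then (−1)^s · sgn_s(π·t) · sgn(π) · sgn_t(π⁻¹·s) · (−1)^t = (−1)^λ, where (−1)^w := (−1)^{inv(w)} is the inversion sign of a word and (−1)^λ is the inversion sign of the word 12…λ_1 12…λ_2 … 12…λ_ℓ. In particular this product depends only on λ, not on the pair (s,t). -/
open Finset

/-- Number of inversions of a word given as a list. -/
def invCount : List ℕ → ℕ
  | [] => 0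
  | a :: l => l.countP (fun b => decide (b < a)) + invCount l

/-- Sign of a finite sequence: its permutation sign if it is a permutation of `1,…,k`
(`k` = its length), and `0` otherwise. -/
def seqSgn (l : List ℕ) : ℤ :=
  if (l : Multiset ℕ) = ((List.range' 1 l.length : List ℕ) : Multiset ℕ) then
    (-1) ^ invCount l
  else 0

/-- Positions (in increasing order) of the letter `i` in the word `s`. -/
def blockList {m : ℕ} (s : Fin m → ℕ) (i : ℕ) : List (Fin m) :=
  (List.finRange m).filter (fun p => decide (s p = i))

/-- The blockwise signature `sgn_s(σ)`: the product over the blocks of `s` of the signs of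
`σ` read along the block (in increasing position order). -/
def sgnWord {m : ℕ} (s σ : Fin m → ℕ) : ℤ :=
  ∏ i ∈ Finset.range m, seqSgn ((blockList s (i + 1)).map σ)

/-- The action of `S_m` on words of length `m` by permuting positions: `(π·t) i = t (π⁻¹ i)`. -/
def pact {m : ℕ} (π : Equiv.Perm (Fin m)) (t : Fin m → ℕ) : Fin m → ℕ :=
  fun p => t (π⁻¹ p)

/-- `w` is a word of weight `L`: the letter `i+1` occurs exactly `L.getD i 0` times. -/
def hasWeight {m : ℕ} (w : Fin m → ℕ) (L : List ℕ) : Prop :=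
  ∀ i : ℕ, (Finset.univ.filter (fun p => w p = i + 1)).card = L.getD i 0

/-- `L` is a partition of `m`. -/
def IsPartitionOf (m : ℕ) (L : List ℕ) : Prop :=
  L.Pairwise (· ≥ ·) ∧ (∀ p ∈ L, 0 < p) ∧ L.sum = m

/-- The conjugate partition, as a list: its `j`-th part is `#{i : L i ≥ j+1}`. -/
def conjList (L : List ℕ) : List ℕ :=
  (List.range (L.headD 0)).map (fun j => L.countP (fun p => decide (j + 1 ≤ p)))

/-- The inversion sign `(−1)^w` of a word. -/
def wordSign {m : ℕ} (w : Fin m → ℕ) : ℤ :=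
  (-1) ^ invCount ((List.finRange m).map w)

/-- The inversion sign `(−1)^λ` of a partition: the inversion sign of the word
`1 2 … λ₁ 1 2 … λ₂ ⋯`. -/
def partSign (L : List ℕ) : ℤ :=
  (-1) ^ invCount ((L.map (fun p => List.range' 1 p)).flatten)

/-- The Young subgroup `Y_s`: the stabilizer of the word `s` in `S_m`. -/
def Ysub {m : ℕ} (s : Fin m → ℕ) : Set (Equiv.Perm (Fin m)) := {π | pact π s = s}

/-- `G(s,t) = {π ∈ S_m : sgn_s(π·t) ≠ 0}`. -/
def Gst {m : ℕ} (s t : Fin m → ℕ) : Set (Equiv.Perm (Fin m)) :=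
  {π | sgnWord s (pact π t) ≠ 0}

/-!
Put `u = π·t`, `v = π⁻¹·s` and `c p = (s p, u p)`. The condition `π ∈ G(s,t)` makes `u` a
permutation of `1, …, λᵢ` on the block of `s` with letter `i`, so `c` is a bijection from the
positions onto the cells of the Young diagram of `λ`. Then `q ↦ (t q, v q)` is `c ∘ π` with its
coordinates swapped, and as column `j` of the diagram has `λ'_j` cells, `v` also reads a
permutation on every block of `t`.

Merging the inversions of a word with the blockwise inversions inside its blocks gives the
inversions for the lexicographic order. Hence `(−1)^s sgn_s(u)` is the inversion sign of `c` in
row-lexicographic order, and `sgn_t(v) (−1)^t` is `sgn π` times the inversion sign of `c` in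
column-lexicographic order. The product of these two inversion signs of `c` does not change when
`c` is precomposed with a permutation, so it may be computed on the row reading of the diagram,
where the row-lexicographic sign is `1` and the column-lexicographic one is the inversion sign of
the column indices `1 … λ₁ 1 … λ₂ ⋯`, that is `(−1)^λ`.
-/

section

variable {m : ℕ}

open scoped Classical in
noncomputable def pairSign (P : Fin m → Fin m → Prop) : ℤ :=
  ∏ j, ∏ i ∈ Iio j, if P i j then -1 else 1

lemma pairSign_eq_prod (P : Fin m → Fin m → Prop) [DecidableRel P] :
    pairSign P = ∏ j, ∏ i ∈ Iio j, if P i j then -1 else 1 := by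
  unfold pairSign
  congr!

lemma pairSign_congr {P Q : Fin m → Fin m → Prop} (h : ∀ i j, i < j → (P i j ↔ Q i j)) :
    pairSign P = pairSign Q := by
  unfold pairSign
  refine prod_congr rfl fun j _ => prod_congr rfl fun i hi => ?_
  rw [propext (h i j (mem_Iio.mp hi))]

lemma pairSign_eq_one {P : Fin m → Fin m → Prop} (h : ∀ i j, i < j → ¬ P i j) :
    pairSign P = 1 :=
  prod_eq_one fun j _ => prod_eq_one fun i hi => if_neg (h i j (mem_Iio.mp hi))

lemma prod_pairSign {α : Type*} (A : Finset α) (P : α → Fin m → Fin m → Prop)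
    (h : ∀ i j, ∀ a ∈ A, ∀ b ∈ A, P a i j → P b i j → a = b) :
    ∏ a ∈ A, pairSign (P a) = pairSign fun i j => ∃ a ∈ A, P a i j := by
  unfold pairSign
  rw [prod_comm]
  refine prod_congr rfl fun j _ => ?_
  rw [prod_comm]
  refine prod_congr rfl fun i _ => ?_
  convert prod_ite_one A (fun a => P a i j) (h i j) (-1 : ℤ)

lemma pairSign_mul {P Q : Fin m → Fin m → Prop} (h : ∀ i j, i < j → ¬ (P i j ∧ Q i j)) :
    pairSign P * pairSign Q = pairSign fun i j => P i j ∨ Q i j := by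
  unfold pairSign
  rw [← prod_mul_distrib]
  refine prod_congr rfl fun j _ => ?_
  rw [← prod_mul_distrib]
  refine prod_congr rfl fun i hi => ?_
  have := h i j (mem_Iio.mp hi)
  split_ifs <;> simp_all

noncomputable def invSign {K : Type*} [LT K] (k : Fin m → K) : ℤ := pairSign fun i j => k j < k i

lemma invSign_comp_perm {K : Type*} [LinearOrder K] {k : Fin m → K} (hk : Function.Injective k)
    (σ : Equiv.Perm (Fin m)) : invSign (k ∘ σ) = Equiv.Perm.sign σ * invSign k := by
  -- antisymmetric, as `prod_Iio_comp_eq_sign_mul_prod` requires; off ties, the inversion indicator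
  set f : Fin m → Fin m → ℤ := fun a b => if k b < k a then -1 else if k a < k b then 1 else 0
  have hf : ∀ a b, f a b = -f b a := fun a b => by
    simp only [f]; split_ifs <;> first | rfl | (exfalso; order)
  have hpair : ∀ a b, a ≠ b → f a b = if k b < k a then -1 else 1 := fun a b hab => by
    have := hk.ne hab
    simp only [f]; split_ifs <;> first | rfl | (exfalso; order)
  rw [invSign, invSign, pairSign_eq_prod, pairSign_eq_prod]
  calc (∏ j, ∏ i ∈ Iio j, if k (σ j) < k (σ i) then -1 else 1)
        = ∏ j, ∏ i ∈ Iio j, f (σ i) (σ j) :=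
        prod_congr rfl fun j _ => prod_congr rfl fun i hi =>
          (hpair _ _ (σ.injective.ne (mem_Iio.mp hi).ne)).symm
    _ = Equiv.Perm.sign σ * ∏ j, ∏ i ∈ Iio j, f i j := by
        simpa using σ.prod_Iio_comp_eq_sign_mul_prod hf
    _ = Equiv.Perm.sign σ * ∏ j, ∏ i ∈ Iio j, if k j < k i then -1 else 1 := by
        congr 1
        exact prod_congr rfl fun j _ => prod_congr rfl fun i hi => hpair _ _ (mem_Iio.mp hi).ne

lemma invSign_eq_one_of_strictMono {K : Type*} [Preorder K] {k : Fin m → K} (hk : StrictMono k) :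
    invSign k = 1 :=
  pairSign_eq_one fun _ _ hij => (hk hij).asymm

lemma invCount_cons (a : ℕ) (l : List ℕ) :
    invCount (a :: l) = l.countP (fun b => b < a) + invCount l := rfl

lemma pow_countP_eq_pairSign {l : List (Fin m)} {a : Fin m} (ha : ∀ j ∈ l, a < j) (hl : l.Nodup)
    (R : Fin m → Prop) [DecidablePred R] :
    (-1 : ℤ) ^ l.countP (fun j => R j) = pairSign fun i j => i = a ∧ j ∈ l ∧ R j := by
  have hcard : l.countP (fun j => R j) = #{j | j ∈ l ∧ R j} := by
    rw [List.countP_eq_length_filter, ← List.toFinset_card_of_nodup (hl.filter _)]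
    congr 1
    ext j
    simp
  rw [pairSign_eq_prod, hcard, ← mul_one ((-1 : ℤ) ^ _), ← prod_const, ← prod_const_one, ← prod_ite]
  refine prod_congr rfl fun j _ => ?_
  simp only [ite_and]
  by_cases hj : j ∈ l <;> simp [hj, ha]

lemma pow_invCount_map (x : Fin m → ℕ) {l : List (Fin m)} (hl : l.Pairwise (· < ·)) :
    (-1 : ℤ) ^ invCount (l.map x) = pairSign fun i j => i ∈ l ∧ j ∈ l ∧ x j < x i := by
  induction l with
  | nil => exact (pairSign_eq_one fun _ _ _ h => by simp at h).symm
  | cons a l ih =>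
    obtain ⟨ha, hl⟩ := List.pairwise_cons.mp hl
    have hal : a ∉ l := fun h => (ha a h).false
    have hdisj : ∀ i j : Fin m, i < j →
        ¬ ((i = a ∧ j ∈ l ∧ x j < x a) ∧ (i ∈ l ∧ j ∈ l ∧ x j < x i)) :=
      fun i j _ h => hal (h.1.1 ▸ h.2.1)
    rw [List.map_cons, invCount_cons, pow_add, List.countP_map, Function.comp_def, ih hl,
      pow_countP_eq_pairSign ha (hl.imp ne_of_lt) (fun j => x j < x a),
      pairSign_mul hdisj]
    refine pairSign_congr fun i j hij => ?_
    grind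

lemma mem_blockList {w : Fin m → ℕ} {a : ℕ} {p : Fin m} : p ∈ blockList w a ↔ w p = a := by
  simp [blockList]

lemma blockList_pairwise (w : Fin m → ℕ) (a : ℕ) : (blockList w a).Pairwise (· < ·) :=
  (List.pairwise_lt_finRange m).filter _

lemma length_blockList (w : Fin m → ℕ) (a : ℕ) : (blockList w a).length = #{p | w p = a} := by
  rw [← List.toFinset_card_of_nodup ((blockList_pairwise w a).imp ne_of_lt)]
  congr 1
  ext p
  simp [mem_blockList]

lemma wordSign_eq_invSign (w : Fin m → ℕ) : wordSign w = invSign w := by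
  rw [wordSign, pow_invCount_map w (List.pairwise_lt_finRange m)]
  exact pairSign_congr fun i j _ => by simp

lemma seqSgn_of_perm {l : List ℕ} (h : l.Perm (List.range' 1 l.length)) :
    seqSgn l = (-1) ^ invCount l :=
  if_pos (Multiset.coe_eq_coe.mpr h)

lemma perm_of_seqSgn_ne_zero {l : List ℕ} (h : seqSgn l ≠ 0) : l.Perm (List.range' 1 l.length) :=
  Multiset.coe_eq_coe.mp (by_contra fun hc => h (if_neg hc))

def BlockwisePerm (w x : Fin m → ℕ) : Prop :=
  ∀ a < m, ((blockList w (a + 1)).map x).Perm (List.range' 1 (blockList w (a + 1)).length)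

lemma blockwisePerm_of_sgnWord_ne_zero {w x : Fin m → ℕ} (h : sgnWord w x ≠ 0) :
    BlockwisePerm w x := by
  intro a ha
  simpa using perm_of_seqSgn_ne_zero (prod_ne_zero_iff.mp h a (mem_range.mpr ha))

lemma sgnWord_eq_pairSign {w x : Fin m → ℕ} (hw : ∀ p, 1 ≤ w p ∧ w p ≤ m)
    (hx : BlockwisePerm w x) : sgnWord w x = pairSign fun i j => w i = w j ∧ x j < x i := by
  have hblock : ∀ a ∈ range m, seqSgn ((blockList w (a + 1)).map x)
      = pairSign fun i j => w i = a + 1 ∧ w j = a + 1 ∧ x j < x i := by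
    intro a ha
    rw [seqSgn_of_perm (by simpa using hx a (mem_range.mp ha)),
      pow_invCount_map x (blockList_pairwise w _)]
    exact pairSign_congr fun i j _ => by simp only [mem_blockList]
  rw [sgnWord, prod_congr rfl hblock, prod_pairSign _ _ fun i j a _ b _ ha hb => by omega]
  refine pairSign_congr fun i j _ => ⟨fun ⟨a, _, hi, hj, hx⟩ => ⟨hi.trans hj.symm, hx⟩,
    fun ⟨hij, hx⟩ => ?_⟩
  have := hw i
  exact ⟨w i - 1, mem_range.mpr (by omega), by omega, by omega, hx⟩

lemma wordSign_mul_sgnWord {w x : Fin m → ℕ} (hw : ∀ p, 1 ≤ w p ∧ w p ≤ m)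
    (hx : BlockwisePerm w x) : wordSign w * sgnWord w x = invSign fun p => toLex (w p, x p) := by
  rw [wordSign_eq_invSign, sgnWord_eq_pairSign hw hx, invSign, invSign,
    pairSign_mul fun i j _ h => by omega]
  exact pairSign_congr fun i j _ => by rw [Prod.Lex.toLex_lt_toLex, eq_comm]

lemma mem_range'_of_blockwisePerm {w x : Fin m → ℕ} (hx : BlockwisePerm w x) {p : Fin m} {a : ℕ}
    (hp : w p = a + 1) (ha : a < m) : x p ∈ List.range' 1 (blockList w (a + 1)).length :=
  (hx a ha).subset (List.mem_map_of_mem (mem_blockList.mpr hp))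

lemma injective_of_blockwisePerm {w x : Fin m → ℕ} (hw : ∀ p, 1 ≤ w p ∧ w p ≤ m)
    (hx : BlockwisePerm w x) : Function.Injective fun p => (w p, x p) := by
  intro p q hpq
  obtain ⟨hwpq, hxpq⟩ := Prod.mk.inj hpq
  have hnodup := (hx (w p - 1) (by have := hw p; omega)).nodup_iff.mpr List.nodup_range'
  have := hw p
  exact List.inj_on_of_nodup_map hnodup (mem_blockList.mpr (by omega))
    (mem_blockList.mpr (by omega)) hxpq

-- The cells `(i, j)`, `1 ≤ j ≤ λᵢ`, of the Young diagram of `L`, in row reading order.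
def cellsList (L : List ℕ) : List (ℕ × ℕ) :=
  (List.ofFn fun i : Fin L.length => (List.range' 1 L[i]).map (Prod.mk ((i : ℕ) + 1))).flatten

lemma mem_cellsList {L : List ℕ} {a b : ℕ} :
    (a, b) ∈ cellsList L ↔ ∃ i < L.length, a = i + 1 ∧ 1 ≤ b ∧ b ≤ L.getD i 0 := by
  simp only [cellsList, List.mem_flatten, List.mem_ofFn]
  constructor
  · rintro ⟨_, ⟨i, rfl⟩, hab⟩
    obtain ⟨b, hb, hab⟩ := List.mem_map.mp hab
    obtain ⟨rfl, rfl⟩ := Prod.mk.inj hab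
    have := List.mem_range'_1.mp hb
    refine ⟨i, i.is_lt, rfl, this.1, ?_⟩
    rw [List.getD_eq_getElem _ _ i.is_lt]
    simp only [Fin.getElem_fin] at this
    omega
  · rintro ⟨i, hi, rfl, hb1, hb2⟩
    rw [List.getD_eq_getElem _ _ hi] at hb2
    refine ⟨_, ⟨⟨i, hi⟩, rfl⟩, List.mem_map_of_mem (List.mem_range'_1.mpr ⟨hb1, ?_⟩)⟩
    simp only [Fin.getElem_fin]
    omega

lemma length_cellsList (L : List ℕ) : (cellsList L).length = L.sum := by
  simp [cellsList, List.sum_ofFn]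

lemma map_snd_cellsList (L : List ℕ) :
    (cellsList L).map Prod.snd = (L.map (List.range' 1)).flatten := by
  simp only [cellsList, List.map_flatten, List.map_ofFn, Function.comp_def, List.map_map]
  simp [← List.ofFn_getElem_eq_map L (List.range' 1)]

lemma cellsList_pairwise (L : List ℕ) : (cellsList L).Pairwise fun x y => toLex x < toLex y := by
  simp only [cellsList, List.pairwise_flatten, List.pairwise_ofFn, List.mem_ofFn]
  refine ⟨?_, ?_⟩
  · rintro _ ⟨i, rfl⟩
    refine List.pairwise_map.mpr ((List.pairwise_lt_range' (s := 1)).imp fun h => ?_)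
    exact Prod.Lex.toLex_lt_toLex.mpr (Or.inr ⟨rfl, h⟩)
  · intro i j hij x hx y hy
    obtain ⟨b, -, rfl⟩ := List.mem_map.mp hx
    obtain ⟨b', -, rfl⟩ := List.mem_map.mp hy
    exact Prod.Lex.toLex_lt_toLex.mpr (Or.inl (by simpa using hij))

noncomputable def rowColSign (c : Fin m → ℕ × ℕ) : ℤ :=
  invSign (toLex ∘ c) * invSign (toLex ∘ Prod.swap ∘ c)

lemma rowColSign_comp_perm {c : Fin m → ℕ × ℕ} (hc : Function.Injective c)
    (σ : Equiv.Perm (Fin m)) : rowColSign (c ∘ σ) = rowColSign c := by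
  have hrow : invSign (toLex ∘ c ∘ σ) = Equiv.Perm.sign σ * invSign (toLex ∘ c) :=
    invSign_comp_perm (toLex.injective.comp hc) σ
  have hcol : invSign (toLex ∘ Prod.swap ∘ c ∘ σ)
      = Equiv.Perm.sign σ * invSign (toLex ∘ Prod.swap ∘ c) :=
    invSign_comp_perm (toLex.injective.comp (Prod.swap_injective.comp hc)) σ
  rw [rowColSign, rowColSign, hrow, hcol]
  linear_combination invSign (toLex ∘ c) * invSign (toLex ∘ Prod.swap ∘ c) *
    Int.units_coe_mul_self (Equiv.Perm.sign σ)

lemma exists_perm_eq_comp {ι α : Type*} [Finite ι] {f g : ι → α} (hf : Function.Injective f)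
    (h : ∀ p, f p ∈ Set.range g) : ∃ σ : Equiv.Perm ι, f = g ∘ σ := by
  choose τ hτ using h
  have hτ_inj : Function.Injective τ := fun p q hpq => hf (by rw [← hτ p, ← hτ q, hpq])
  exact ⟨Equiv.ofBijective τ (Finite.injective_iff_bijective.mp hτ_inj),
    funext fun p => (hτ p).symm⟩

lemma rowColSign_eq_partSign {L : List ℕ} (hm : L.sum = m) {c : Fin m → ℕ × ℕ}
    (hc : Function.Injective c) (hcells : ∀ p, c p ∈ cellsList L) : rowColSign c = partSign L := by
  rw [← length_cellsList] at hm
  subst hm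
  obtain ⟨σ, rfl⟩ := exists_perm_eq_comp hc fun p => List.mem_iff_get.mp (hcells p)
  set g := (cellsList L).get
  have hg : StrictMono (toLex ∘ g) := fun i j hij =>
    List.pairwise_iff_get.mp (cellsList_pairwise L) i j hij
  rw [rowColSign_comp_perm hg.injective.of_comp, rowColSign, invSign_eq_one_of_strictMono hg,
    one_mul]
  have hcol : invSign (toLex ∘ Prod.swap ∘ g) = invSign (Prod.snd ∘ g) := by
    refine pairSign_congr fun i j hij => ?_
    have := hg hij
    simp only [Function.comp_apply, Prod.Lex.toLex_lt_toLex, Prod.fst_swap, Prod.snd_swap] at this ⊢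
    omega
  rw [hcol, ← wordSign_eq_invSign, wordSign, ← List.map_map, List.map_get_finRange,
    map_snd_cellsList, partSign]

lemma exists_eq_succ_of_hasWeight {w : Fin m → ℕ} {Λ : List ℕ} (hw : hasWeight w Λ)
    (hsum : Λ.sum = m) (p : Fin m) : ∃ i < Λ.length, w p = i + 1 := by
  set S := (range Λ.length).biUnion fun i => ({q | w q = i + 1} : Finset (Fin m))
  have hS : #S = m := by
    rw [card_biUnion fun i _ j _ hij => disjoint_filter.mpr fun q _ hi hj => hij (by omega),
      sum_congr rfl fun i _ => hw i, sum_range]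
    simp only [List.getD_eq_getElem _ _ (Fin.is_lt _)]
    rw [← List.sum_ofFn, List.ofFn_getElem, hsum]
  have hp : p ∈ S := (eq_univ_of_card S (by rw [hS, Fintype.card_fin])) ▸ mem_univ p
  simpa [S] using hp

lemma mem_Icc_of_hasWeight {L : List ℕ} (hL : IsPartitionOf m L) {w : Fin m → ℕ}
    (hw : hasWeight w L) (p : Fin m) : 1 ≤ w p ∧ w p ≤ m := by
  obtain ⟨-, hpos, hsum⟩ := hL
  obtain ⟨i, hi, hwi⟩ := exists_eq_succ_of_hasWeight hw hsum p
  have := List.length_le_sum_of_one_le L hpos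
  omega

lemma mem_cellsList_of_blockwisePerm {L : List ℕ} (hL : IsPartitionOf m L) {w x : Fin m → ℕ}
    (hw : hasWeight w L) (hx : BlockwisePerm w x) (p : Fin m) : (w p, x p) ∈ cellsList L := by
  obtain ⟨i, hi, hwi⟩ := exists_eq_succ_of_hasWeight hw hL.2.2 p
  have hxp := mem_range'_of_blockwisePerm hx hwi (by have := mem_Icc_of_hasWeight hL hw p; omega)
  rw [length_blockList, hw i, List.mem_range'_1] at hxp
  exact mem_cellsList.mpr ⟨i, hi, hwi, hxp.1, by omega⟩

lemma getD_le_of_forall_le {L : List ℕ} {a : ℕ} (h : ∀ x ∈ L, x ≤ a) (i : ℕ) : L.getD i 0 ≤ a := by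
  rw [List.getD_eq_getElem?_getD]
  cases hx : L[i]? with
  | none => simp
  | some x => exact h x (List.mem_of_getElem? hx)

lemma lt_countP_lt_iff {L : List ℕ} (hL : L.Pairwise (· ≥ ·)) (i j : ℕ) :
    i < L.countP (fun p => j < p) ↔ j < L.getD i 0 := by
  induction L generalizing i with
  | nil => simp
  | cons a L ih =>
    obtain ⟨ha, hL⟩ := List.pairwise_cons.mp hL
    by_cases hja : j < a
    · rw [List.countP_cons_of_pos (by simpa using hja)]
      cases i with
      | zero => simpa using hja
      | succ i => rw [List.getD_cons_succ, ← ih hL]; omega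
    · have hle : ∀ x ∈ a :: L, x ≤ a := by simpa using ha
      rw [List.countP_eq_zero.mpr fun p hp => by simpa using (hle p hp).trans (not_lt.mp hja)]
      have := getD_le_of_forall_le hle i
      omega

lemma conjList_getD {L : List ℕ} (hL : L.Pairwise (· ≥ ·)) (j : ℕ) :
    (conjList L).getD j 0 = L.countP (fun p => j < p) := by
  by_cases hj : j < L.headD 0
  · rw [List.getD_eq_getElem _ _ (by simpa [conjList] using hj)]
    simp [conjList]
  · have hle : ∀ p ∈ L, p ≤ L.headD 0 := by
      cases L with
      | nil => simp
      | cons a L => simpa using (List.pairwise_cons.mp hL).1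
    rw [List.getD_eq_default _ _ (by simpa [conjList] using hj),
      List.countP_eq_zero.mpr fun p hp => by have := hle p hp; simp only [decide_eq_true_eq]; omega]

lemma lt_conjList_getD_iff {L : List ℕ} (hL : L.Pairwise (· ≥ ·)) (i j : ℕ) :
    i < (conjList L).getD j 0 ↔ j < L.getD i 0 := by
  rw [conjList_getD hL, lt_countP_lt_iff hL]

lemma snd_le_sum_of_mem_cellsList {L : List ℕ} {a b : ℕ} (h : (a, b) ∈ cellsList L) :
    1 ≤ b ∧ b ≤ L.sum := by
  obtain ⟨i, -, -, hb1, hb2⟩ := mem_cellsList.mp h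
  exact ⟨hb1, hb2.trans (getD_le_of_forall_le (fun _ => List.le_sum_of_mem) i)⟩

lemma blockwisePerm_of_mem_cellsList {L : List ℕ} (hL : L.Pairwise (· ≥ ·)) {w x : Fin m → ℕ}
    (hw : hasWeight w (conjList L)) (hinj : Function.Injective fun q => (x q, w q))
    (hcells : ∀ q, (x q, w q) ∈ cellsList L) : BlockwisePerm w x := by
  intro b _
  have hnodup : ((blockList w (b + 1)).map x).Nodup := by
    refine List.Nodup.map_on (fun p hp q hq hpq => hinj ?_) ((blockList_pairwise w _).imp ne_of_lt)
    simp only [mem_blockList.mp hp, mem_blockList.mp hq, hpq]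
  -- distinct values in `1, …, λ'_b`, as many as the block has positions
  refine (hnodup.subperm fun a ha => ?_).perm_of_length_le (by simp)
  obtain ⟨q, hq, rfl⟩ := List.mem_map.mp ha
  obtain ⟨i, -, hxq, -, hwq⟩ := mem_cellsList.mp (hcells q)
  have hi := (lt_conjList_getD_iff hL i b).mpr (by have := mem_blockList.mp hq; omega)
  rw [length_blockList, hw b, List.mem_range'_1]
  omega

end

/-- For any `π ∈ G(s,t)`,
`(−1)^s · sgn_s(π·t) · sgn(π) · sgn_t(π⁻¹·s) · (−1)^t = (−1)^λ`. -/
theorem stmt4 {m : ℕ} (L : List ℕ) (hL : IsPartitionOf m L)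
    (s t : Fin m → ℕ) (hs : hasWeight s L) (ht : hasWeight t (conjList L)) :
    ∀ π ∈ Gst s t,
      wordSign s * sgnWord s (pact π t) * ((Equiv.Perm.sign π : ℤ)) *
          sgnWord t (pact π⁻¹ s) * wordSign t = partSign L := by
  intro π hπ
  set u := pact π t
  set v := pact π⁻¹ s
  set c : Fin m → ℕ × ℕ := fun p => (s p, u p)
  have hu : BlockwisePerm s u := blockwisePerm_of_sgnWord_ne_zero hπ
  have hc : Function.Injective c := injective_of_blockwisePerm (mem_Icc_of_hasWeight hL hs) hu
  have hcells : ∀ p, c p ∈ cellsList L := mem_cellsList_of_blockwisePerm hL hs hu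
  have hcπ : ∀ q, (v q, t q) = c (π q) := fun q => by simp [c, u, v, pact]
  have hcells' : ∀ q, (v q, t q) ∈ cellsList L := fun q => by rw [hcπ]; exact hcells _
  have hv : BlockwisePerm t v := blockwisePerm_of_mem_cellsList hL.1 ht
    (fun p q h => π.injective (hc ((hcπ p).symm.trans (h.trans (hcπ q))))) hcells'
  have ht_range : ∀ q, 1 ≤ t q ∧ t q ≤ m :=
    fun q => hL.2.2 ▸ snd_le_sum_of_mem_cellsList (hcells' q)
  calc wordSign s * sgnWord s u * (Equiv.Perm.sign π : ℤ) * sgnWord t v * wordSign t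
      = (wordSign s * sgnWord s u) * (Equiv.Perm.sign π : ℤ) * (wordSign t * sgnWord t v) := by
        ring
    _ = invSign (toLex ∘ c) * (Equiv.Perm.sign π : ℤ) *
          invSign ((toLex ∘ Prod.swap ∘ c) ∘ π) := by
        rw [wordSign_mul_sgnWord (mem_Icc_of_hasWeight hL hs) hu, wordSign_mul_sgnWord ht_range hv]
        congr 2
        exact funext fun q => by simp [← hcπ q]
    _ = rowColSign c := by
        rw [invSign_comp_perm (toLex.injective.comp (Prod.swap_injective.comp hc)), rowColSign]
        linear_combination invSign (toLex ∘ c) * invSign (toLex ∘ Prod.swap ∘ c) *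
          Int.units_coe_mul_self (Equiv.Perm.sign π)
    _ = partSign L := rowColSign_eq_partSign hL.2.2 hc hcells
end

section
/- Interpretation of coefficients as signed fillings: for tables T of weight λ' and S of weight λ, the coefficient a(T,S) = ⟨Δ_T, ⋁ e_S⟩ equals (−1)^T times the signed count Σ_σ sgn(σ) over all (T,S)-fillings σ, i.e. bijections σ from the multiset of columns of T to the multiset of columns of S such that sgn_T(σ(T)) ≠ 0, with sgn(σ) the product over all slices in all d directions of the permutation signs of the induced sequences. -/
open Finset

/-- The signature of a table pair: `sgn_T(X) = ∏ i sgn_{T i}(X i)`. -/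
def sgnTbl {d m : ℕ} (T X : Fin d → Fin m → ℕ) : ℤ := ∏ i, sgnWord (T i) (X i)

/-- The inversion sign `(−1)^T` of a table: the product of the row inversion signs. -/
def tblSign {d m : ℕ} (T : Fin d → Fin m → ℕ) : ℤ := ∏ i, wordSign (T i)

/-- The action of `S_m` on tables by permuting columns. -/
def pactT {d m : ℕ} (π : Equiv.Perm (Fin m)) (T : Fin d → Fin m → ℕ) :
    Fin d → Fin m → ℕ :=
  fun i => pact π (T i)

/-- `‖T‖`: the order of the stabilizer of the table `T` under the column permutation action. -/
noncomputable def stabCard {d m : ℕ} (T : Fin d → Fin m → ℕ) : ℕ :=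
  Nat.card {π : Equiv.Perm (Fin m) // pactT π T = T}

/-- The coefficient `a(T,S) = (−1)^T/(‖T‖·‖S‖) · Σ_{π ∈ S_m} sgn_T(π·S)`. -/
noncomputable def aCoef {d m : ℕ} (T S : Fin d → Fin m → ℕ) : ℚ :=
  (tblSign T : ℚ) / ((stabCard T : ℚ) * (stabCard S : ℚ)) *
    ∑ π : Equiv.Perm (Fin m), (sgnTbl T (pactT π S) : ℚ)

/-- The coefficient `b(S,T) = (−1)^S/‖S‖ · Σ_{π ∈ S_m} sgn(π)·sgn_S(π·T)`. -/
noncomputable def bCoef {d m : ℕ} (S T : Fin d → Fin m → ℕ) : ℚ :=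
  (tblSign S : ℚ) / (stabCard S : ℚ) *
    ∑ π : Equiv.Perm (Fin m),
      ((Equiv.Perm.sign π : ℤ) : ℚ) * (sgnTbl S (pactT π T) : ℚ)

/-- `(−1)^λ` for a `d`-tuple of partitions: the product of the signs of the components. -/
def partSignT {d : ℕ} (Λ : Fin d → List ℕ) : ℤ := ∏ i, partSign (Λ i)

/-- The multiset of columns of a table. -/
def colMS {d m : ℕ} (S : Fin d → Fin m → ℕ) : Multiset (Fin d → ℕ) :=
  Finset.univ.val.map (fun j : Fin m => fun i => S i j)

open scoped Classical in
/-- `(T,S)`-fillings: assignments `c` of a column of `S` to each column of `T` (with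
multiplicity; the entries of a cell of `T` being ordered by position), such that the multiset
of assigned columns equals the multiset of columns of `S`, and in every slice (block of a row
of `T`) the corresponding coordinates form a permutation, i.e. `sgn_T(σ(T)) ≠ 0`. -/
noncomputable def fillingSet {d m : ℕ} (T S : Fin d → Fin m → ℕ) :
    Finset (Fin m → Fin d → Fin (m + 1)) :=
  Finset.univ.filter (fun c =>
    colMS (fun i j => ((c j i : ℕ))) = colMS S ∧
    sgnTbl T (fun i j => (c j i : ℕ)) ≠ 0)

/-!
Column permutations `π` act on `S`, and `sgn_T(π·S)` only depends on the column assignment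
`π·S`. The assignments arising this way are exactly those with the column multiset of `S`
(the `S_m`-orbit of `S`), each arising from a coset of the stabilizer, i.e. from `‖S‖`
permutations. Hence `Σ_π sgn_T(π·S) = ‖S‖ · Σ_c sgn_T(c)` over the orbit, and dropping the
assignments of sign `0` leaves the fillings. Fillings take values in `Fin (m + 1)`; the entries
of `S` fit, since a word of weight `λ ⊢ m` has entries at most `ℓ(λ) ≤ m`.
-/

lemma List.sum_range_getD (L : List ℕ) :
    ∑ k ∈ Finset.range L.length, L.getD k 0 = L.sum := by
  induction L with
  | nil => simp
  | cons a L ih =>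
    rw [List.length_cons, Finset.sum_range_succ', List.sum_cons, ← ih, add_comm]
    rfl

lemma hasWeight.le_length {m : ℕ} {w : Fin m → ℕ} {L : List ℕ} (hw : hasWeight w L)
    (hL : L.sum = m) (p : Fin m) : w p ≤ L.length := by
  set blocks := (Finset.range L.length).biUnion (fun k => univ.filter (fun q => w q = k + 1))
  have hcard : blocks.card = m := by
    rw [card_biUnion]
    · rw [sum_congr rfl fun k _ => hw k, List.sum_range_getD, hL]
    · intro k _ l _ hkl
      simp only [Function.onFun, disjoint_left, mem_filter]
      omega
  have hp : p ∈ blocks := by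
    rw [eq_univ_of_card blocks (by rw [hcard, Fintype.card_fin])]
    exact mem_univ p
  obtain ⟨k, hk, hpk⟩ := mem_biUnion.1 hp
  rw [Finset.mem_range] at hk
  rw [mem_filter] at hpk
  omega

lemma Fintype.exists_perm_comp_eq_iff {ι α : Type*} [Fintype ι] [DecidableEq α]
    {x y : ι → α} :
    (∃ σ : Equiv.Perm ι, x ∘ σ = y) ↔ univ.val.map x = univ.val.map y := by
  constructor
  · rintro ⟨σ, rfl⟩
    rw [← Multiset.map_map, Multiset.map_univ_val_equiv]
  · intro h
    have hcount : ∀ (z : ι → α) a,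
        Fintype.card {i // z i = a} = (univ.val.map z).count a := by
      intro z a
      simp [Multiset.count_map, Fintype.card_subtype, ← Finset.filter_val, eq_comm (a := a)]
    have hfib : ∀ a, Fintype.card {i // y i = a} = Fintype.card {i // x i = a} := by
      intro a
      rw [hcount, hcount, h]
    exact ⟨Equiv.ofFiberEquiv (fun a => Fintype.equivOfCardEq (hfib a)),
      funext (Equiv.ofFiberEquiv_map _)⟩

namespace MulAction

variable {G X M : Type*} [Group G] [Fintype G] [MulAction G X] [DecidableEq X]
  [AddCommMonoid M]

lemma card_filter_smul_eq_smul (x : X) (g₀ : G) :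
    #{g : G | g • x = g₀ • x} = Nat.card (stabilizer G x) := by
  rw [← Fintype.card_subtype, ← Nat.card_eq_fintype_card]
  refine Nat.card_congr (Equiv.subtypeEquiv (Equiv.mulLeft g₀⁻¹) fun g => ?_)
  simp [mem_stabilizer_iff, mul_smul, inv_smul_eq_iff]

/-- Each point `g₀ • x` of the orbit is hit by exactly the coset `g₀ • stabilizer G x`. -/
lemma sum_smul_eq_card_stabilizer_nsmul_sum_orbit (x : X) (f : X → M) :
    ∑ g : G, f (g • x) =
      Nat.card (stabilizer G x) • ∑ y ∈ univ.image (fun g : G => g • x), f y := by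
  rw [sum_comp, smul_sum]
  refine sum_congr rfl fun y hy => ?_
  obtain ⟨g₀, -, rfl⟩ := mem_image.1 hy
  rw [card_filter_smul_eq_smul]

end MulAction

section Tables

attribute [local instance] arrowAction

lemma perm_smul_apply {α β : Type*} (π : Equiv.Perm α) (f : α → β) (a : α) :
    (π • f) a = f (π⁻¹ a) :=
  rfl

variable {d m n : ℕ}

def tableCols (S : Fin d → Fin m → ℕ) (hS : ∀ i j, S i j < n) : Fin m → Fin d → Fin n :=
  fun j i => ⟨S i j, hS i j⟩

lemma pactT_eq_smul_tableCols (S : Fin d → Fin m → ℕ) (hS : ∀ i j, S i j < n)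
    (π : Equiv.Perm (Fin m)) :
    pactT π S = fun i j => ((π • tableCols S hS) j i : ℕ) :=
  rfl

lemma stabCard_eq_card_stabilizer (S : Fin d → Fin m → ℕ) (hS : ∀ i j, S i j < n) :
    stabCard S = Nat.card (MulAction.stabilizer (Equiv.Perm (Fin m)) (tableCols S hS)) := by
  refine Nat.card_congr (Equiv.subtypeEquivRight fun π => ?_)
  rw [MulAction.mem_stabilizer_iff, pactT_eq_smul_tableCols S hS]
  simp only [funext_iff, tableCols, Fin.ext_iff]
  exact forall_comm

lemma image_smul_tableCols (S : Fin d → Fin m → ℕ) (hS : ∀ i j, S i j < n) :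
    univ.image (fun π : Equiv.Perm (Fin m) => π • tableCols S hS) =
      univ.filter (fun c : Fin m → Fin d → Fin n =>
        colMS (fun i j => (c j i : ℕ)) = colMS S) := by
  set toNat : (Fin d → Fin n) → Fin d → ℕ := fun v i => v i
  have hinj : Function.Injective toNat := fun v w h => funext fun i => Fin.ext (congrFun h i)
  have hcolMS : ∀ c : Fin m → Fin d → Fin n,
      colMS (fun i j => (c j i : ℕ)) = (univ.val.map c).map toNat := by
    intro c
    rw [Multiset.map_map]
    rfl
  ext c
  rw [mem_image, mem_filter, show colMS S = _ from hcolMS (tableCols S hS), hcolMS,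
    (Multiset.map_injective hinj).eq_iff, ← Fintype.exists_perm_comp_eq_iff]
  simp only [mem_univ, true_and]
  constructor
  · rintro ⟨π, rfl⟩
    exact ⟨π, funext fun j => by simp [perm_smul_apply]⟩
  · rintro ⟨σ, hσ⟩
    exact ⟨σ, hσ ▸ funext fun j => by simp [perm_smul_apply]⟩

lemma sum_sgnTbl_pactT_eq_stabCard_mul_sum_fillingSet (T S : Fin d → Fin m → ℕ)
    (hS : ∀ i j, S i j < m + 1) :
    ∑ π : Equiv.Perm (Fin m), sgnTbl T (pactT π S) =
      stabCard S * ∑ c ∈ fillingSet T S, sgnTbl T (fun i j => (c j i : ℕ)) := by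
  set sgnFilling := fun c : Fin m → Fin d → Fin (m + 1) => sgnTbl T (fun i j => (c j i : ℕ))
  calc ∑ π : Equiv.Perm (Fin m), sgnTbl T (pactT π S)
      = ∑ π : Equiv.Perm (Fin m), sgnFilling (π • tableCols S hS) := rfl
    _ = stabCard S • ∑ c ∈ univ.image (· • tableCols S hS), sgnFilling c := by
      rw [MulAction.sum_smul_eq_card_stabilizer_nsmul_sum_orbit, stabCard_eq_card_stabilizer S hS]
    _ = stabCard S * ∑ c ∈ fillingSet T S, sgnFilling c := by
      rw [nsmul_eq_mul, image_smul_tableCols, fillingSet, ← filter_filter, sum_filter_ne_zero]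

end Tables

theorem stmt16_general {d m : ℕ} (Λ : Fin d → List ℕ) (hΛ : ∀ i, IsPartitionOf m (Λ i))
    (T S : Fin d → Fin m → ℕ)
    (hS : ∀ i, hasWeight (S i) (Λ i)) :
    aCoef T S =
      (tblSign T : ℚ) *
        (∑ c ∈ fillingSet T S, (sgnTbl T (fun i j => (c j i : ℕ)) : ℚ)) /
          (stabCard T : ℚ) := by
  have hS_lt : ∀ i j, S i j < m + 1 := fun i j =>
    calc S i j ≤ (Λ i).length := (hS i).le_length (hΛ i).2.2 j
      _ ≤ (Λ i).sum := List.length_le_sum_of_one_le _ (hΛ i).2.1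
      _ < m + 1 := by rw [(hΛ i).2.2]; omega
  have hstabCard_ne_zero : ∀ U : Fin d → Fin m → ℕ, (stabCard U : ℚ) ≠ 0 := fun U =>
    have : Nonempty {π // pactT π U = U} := ⟨⟨1, rfl⟩⟩
    Nat.cast_ne_zero.2 Nat.card_pos.ne'
  have hsum := congrArg (Int.cast : ℤ → ℚ)
    (sum_sgnTbl_pactT_eq_stabCard_mul_sum_fillingSet T S hS_lt)
  push_cast at hsum
  rw [aCoef, hsum]
  field_simp [hstabCard_ne_zero T, hstabCard_ne_zero S]

/-- The coefficient `a(T,S) = ⟨Δ_T, ⋁ e_S⟩` equals `(−1)^T` times the signed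
count of `(T,S)`-fillings, where `sgn(σ) = sgn_T(σ(T))` is the product over all slices in all
`d` directions of the signs of the induced sequences (the factor `‖T‖` accounting for the
ordering of the entries within each cell of `T`). -/
theorem stmt16 {d m : ℕ} (Λ : Fin d → List ℕ) (hΛ : ∀ i, IsPartitionOf m (Λ i))
    (T S : Fin d → Fin m → ℕ)
    (hT : ∀ i, hasWeight (T i) (conjList (Λ i))) (hS : ∀ i, hasWeight (S i) (Λ i)) :
    aCoef T S =
      (tblSign T : ℚ) *
        (∑ c ∈ fillingSet T S, (sgnTbl T (fun i j => (c j i : ℕ)) : ℚ)) /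
          (stabCard T : ℚ) :=
  stmt16_general Λ hΛ T S hS
end
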